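/- arXiv:math/0008054 — 2 statements merged into one kernel-verified Lean document; each statement's English description precedes it below -/
import Mathlib

section
/- There do not exist positive integers n, ñ, q, g_X, g_Y, g_Z and natural numbers R₁, R₂ ≥ 0 such that: ñ ≥ 2, n = q·ñ, n ≠ 2, g_X ≥ 3, 2g_Y − 2 = n·(2g_X − 2) + R₁, 2g_Y − 2 = ñ·(2g_Z − 2) + R₂, and g_Y ≤ g_X + g_Z. (This is the arithmetic core of the theorem that for a degree-n covering π: Y → X with g_X > 2 and n ≠ 2, the Abel–Prym morphism ρ̃: Y → P̃ is birational onto its image: if ρ̃ were not birational, then with Z the normalization of ρ̃(Y), ñ = deg(Y → Z), R₁ and R₂ the degrees of the ramification divisors of π and of Y → Z, the Riemann–Hurwitz formulas and the inequality g_Y − g_X = dim P̃ ≤ g_Z would yield exactly this system, which has no solution.) -/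
/-- Arithmetic core of the birationality theorem for the Abel–Prym map
(`g_X > 2`, `n ≠ 2`): the Riemann–Hurwitz system has no solution. -/
theorem abel_prym_arith_no_solution :
    ¬ ∃ (n n' q gX gY gZ R₁ R₂ : ℤ),
      0 < n ∧ 0 < n' ∧ 0 < q ∧ 0 < gX ∧ 0 < gY ∧ 0 < gZ ∧
      0 ≤ R₁ ∧ 0 ≤ R₂ ∧
      2 ≤ n' ∧ n = q * n' ∧ n ≠ 2 ∧ 3 ≤ gX ∧
      2 * gY - 2 = n * (2 * gX - 2) + R₁ ∧
      2 * gY - 2 = n' * (2 * gZ - 2) + R₂ ∧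
      gY ≤ gX + gZ := by
  rintro ⟨n, n', q, gX, gY, gZ, R₁, R₂, hn, hn', hq, hgX0, hgY0, hgZ0,
    hR₁, hR₂, hn'2, hqn, hne2, hgX, h1, h2, hle⟩
  -- n ≥ 2 since n = q * n' with q ≥ 1, n' ≥ 2
  have hn2 : 2 ≤ n := by nlinarith
  have hn3 : 3 ≤ n := by omega
  -- from h1 : 2gY - 2 ≥ 3 * (2gX - 2) ≥ 12, so gY ≥ 7
  have key1 : 3 * (2 * gX - 2) ≤ n * (2 * gX - 2) := by nlinarith
  have hgY7 : 7 ≤ gY := by omega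
  -- from h2 : 2gY - 2 ≥ 2 * (2gZ - 2)
  have key2 : 2 * (2 * gZ - 2) ≤ n' * (2 * gZ - 2) := by nlinarith
  -- combine: gY ≤ 7
  have hgY7' : gY ≤ 7 := by omega
  have hgY : gY = 7 := le_antisymm hgY7' hgY7
  subst hgY
  -- now 12 = n * (2gX - 2) + R₁ with n ≥ 3, 2gX - 2 ≥ 4
  have h4n : 4 * n ≤ n * (2 * gX - 2) := by nlinarith
  have hnval : n = 3 := by omega
  subst hnval
  have hgXval : gX = 3 := by omega
  subst hgXval
  -- gZ ≥ 4, and 12 = n' * (2gZ - 2) + R₂, 2gZ - 2 ≥ 6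
  have hgZ4 : 4 ≤ gZ := by omega
  have h6n' : 6 * n' ≤ n' * (2 * gZ - 2) := by nlinarith
  have hn'val : n' = 2 := by omega
  subst hn'val
  omega
end

section
/- Suppose positive integers n, ñ, q, g_X, g_Y, g_Z and natural numbers R₁, R₂ ≥ 0 satisfy: ñ ≥ 2, n = q·ñ, n ≠ 2, g_X ≥ 2, 2g_Y − 2 = n·(2g_X − 2) + R₁, 2g_Y − 2 = ñ·(2g_Z − 2) + R₂, and g_Y ≤ g_X + g_Z. Then either (n, ñ, g_Y, g_X, g_Z, R₁, R₂) = (3, 3, 4, 2, 2, 0, 0) or (n, ñ, g_Y, g_X, g_Z, R₁, R₂) = (4, 2, 5, 2, 3, 0, 0). (This is the arithmetic content of the paper's classification: for g_X ≥ 2 and deg π ≠ 2, the Abel–Prym morphism can fail to be birational onto its image only in the two listed unramified cases.) -/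
/-- Arithmetic classification: for `g_X ≥ 2` and `deg π = n ≠ 2`, the
Abel–Prym morphism can fail to be birational only in two unramified cases. -/
theorem abel_prym_arith_classification
    (n n' q gX gY gZ R₁ R₂ : ℤ)
    (hn : 0 < n) (hn' : 0 < n') (hq : 0 < q) (hgX : 0 < gX) (hgY : 0 < gY)
    (hgZ : 0 < gZ) (hR₁ : 0 ≤ R₁) (hR₂ : 0 ≤ R₂)
    (hn'2 : 2 ≤ n') (hdvd : n = q * n') (hn2 : n ≠ 2) (hgX2 : 2 ≤ gX)
    (hRH₁ : 2 * gY - 2 = n * (2 * gX - 2) + R₁)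
    (hRH₂ : 2 * gY - 2 = n' * (2 * gZ - 2) + R₂)
    (hdim : gY ≤ gX + gZ) :
    (n, n', gY, gX, gZ, R₁, R₂) = (3, 3, 4, 2, 2, 0, 0) ∨
    (n, n', gY, gX, gZ, R₁, R₂) = (4, 2, 5, 2, 3, 0, 0) := by
  have hA : n * (gX - 1) ≤ gX + gZ - 1 := by nlinarith
  have hB : n' * (gZ - 1) ≤ gX + gZ - 1 := by nlinarith
  have hn3 : 3 ≤ n := by
    have : 2 ≤ n := by nlinarith
    omega
  have hnle : n ≤ 4 := by nlinarith
  have hgXle : gX ≤ 3 := by nlinarith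
  have hn'le : n' ≤ n := by nlinarith
  have hgZle : gZ ≤ 4 := by nlinarith
  simp only [Prod.mk.injEq]
  interval_cases n <;> interval_cases n' <;> interval_cases gX <;>
    interval_cases gZ <;> omega
end
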